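/- arXiv:1902.05213 — 2 statements merged into one kernel-verified Lean document; each statement's English description precedes it below -/
import Mathlib

section
/- For every integer n ≥ 1, the empirical average X̄_n = (1/n)∑_{i=1}^K T_i(n) X̄_{i,T_i(n)} of all rewards collected in the first n plays under the UCB policy satisfies |E[X̄_n] − μ*| ≤ |δ_{*,n}| + (2R/n) · E[∑_{i ≠ i*} T_i(n)], where δ_{*,n} = μ_{i*,n} − μ_{i*}. -/
open MeasureTheory ProbabilityTheory Finset

noncomputable section

/-- Empirical average `X̄_{i,n} = (1/n) ∑_{t=1}^n X_{i,t}` of the first `n` rewards of arm `i`. -/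
def empAvg {Ω : Type*} {K : ℕ} (X : Fin K → ℕ → Ω → ℝ) (i : Fin K) (n : ℕ) (ω : Ω) : ℝ :=
  (∑ t ∈ Finset.Icc 1 n, X i t ω) / n

/-- Bonus term `B_{t,s} = β^{1/ξ} t^{α/ξ} / s^{1-η}`. -/
def bonus (β ξ α η : ℝ) (t s : ℕ) : ℝ :=
  β ^ (1 / ξ) * (t : ℝ) ^ (α / ξ) / (s : ℝ) ^ (1 - η)

/-- Upper confidence index `U_{i,s,t} = X̄_{i,s} + B_{t,s}`. -/
def ucbIdx {Ω : Type*} {K : ℕ} (X : Fin K → ℕ → Ω → ℝ) (β ξ α η : ℝ)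
    (i : Fin K) (s t : ℕ) (ω : Ω) : ℝ :=
  empAvg X i s ω + bonus β ξ α η t s

/-- `T_i(t) = ∑_{l=1}^t 1{I_l = i}`, the number of plays of arm `i` up to (and including)
time `t`. -/
def playCount {Ω : Type*} {K : ℕ} (I : ℕ → Ω → Fin K) (i : Fin K) (t : ℕ) (ω : Ω) : ℕ :=
  ((Finset.Icc 1 t).filter fun l => I l ω = i).card

/-- The `EReal`-valued index `X̄_{i,T_i(t)} + B_{t,T_i(t)}` used by the UCB policy at the end
of time `t`, with the convention that the index is `+∞` when `T_i(t) = 0`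
(i.e. `B_{t,0} = +∞`). -/
def ucbIdxE {Ω : Type*} {K : ℕ} (X : Fin K → ℕ → Ω → ℝ) (β ξ α η : ℝ)
    (I : ℕ → Ω → Fin K) (j : Fin K) (t : ℕ) (ω : Ω) : EReal :=
  if playCount I j t ω = 0 then ⊤
  else ((ucbIdx X β ξ α η j (playCount I j t ω) t ω : ℝ) : EReal)

/-- Empirical average `X̄_n = (1/n) ∑_{i=1}^K T_i(n) X̄_{i,T_i(n)}` of all rewards collected
in the first `n` plays. -/
def rewardAvg {Ω : Type*} {K : ℕ} (X : Fin K → ℕ → Ω → ℝ) (I : ℕ → Ω → Fin K)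
    (n : ℕ) (ω : Ω) : ℝ :=
  (∑ i : Fin K, (playCount I i n ω : ℝ) * empAvg X i (playCount I i n ω) ω) / n

section aux
variable {Ω : Type*} {K : ℕ}

lemma playCount_le (I : ℕ → Ω → Fin K) (i : Fin K) (t : ℕ) (ω : Ω) :
    playCount I i t ω ≤ t := by
  have := Finset.card_filter_le (Finset.Icc 1 t) (fun l => I l ω = i)
  simpa [playCount, Nat.card_Icc] using this

lemma sum_playCount (I : ℕ → Ω → Fin K) (n : ℕ) (ω : Ω) :
    ∑ i : Fin K, playCount I i n ω = n := by
  have := Finset.card_eq_sum_card_fiberwise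
    (f := fun l => I l ω) (s := Finset.Icc 1 n) (t := Finset.univ)
    (fun x _ => Finset.mem_univ _)
  simpa [playCount, Nat.card_Icc] using this.symm

lemma measurable_playCount [MeasurableSpace Ω] (I : ℕ → Ω → Fin K)
    (hImeas : ∀ t, Measurable (I t)) (i : Fin K) (t : ℕ) :
    Measurable fun ω => playCount I i t ω := by
  have h : (fun ω => playCount I i t ω)
      = fun ω => ∑ l ∈ Finset.Icc 1 t, if I l ω = i then 1 else 0 := by
    funext ω; rw [playCount, Finset.card_filter]
  rw [h]
  exact Finset.measurable_sum _ fun l _ =>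
    Measurable.ite ((hImeas l) (measurableSet_singleton i)) measurable_const measurable_const

lemma mul_empAvg (X : Fin K → ℕ → Ω → ℝ) (i : Fin K) (T : ℕ) (ω : Ω) :
    (T : ℝ) * empAvg X i T ω = ∑ t ∈ Finset.Icc 1 T, X i t ω := by
  rcases eq_or_ne T 0 with h | h
  · simp [h, empAvg]
  · rw [empAvg, mul_comm, div_mul_cancel₀ _ (by exact_mod_cast h)]

lemma sum_ite_eq' (X : Fin K → ℕ → Ω → ℝ) (i : Fin K) {T n : ℕ} (hTn : T ≤ n) (ω : Ω) :
    ∑ t ∈ Finset.Icc 1 T, X i t ω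
      = ∑ t ∈ Finset.Icc 1 n, if t ≤ T then X i t ω else 0 := by
  rw [← Finset.sum_filter]
  congr 1
  ext t; simp only [Finset.mem_filter, Finset.mem_Icc]; omega

lemma pointwise_bound (X : Fin K → ℕ → Ω → ℝ) (I : ℕ → Ω → Fin K)
    (R : ℝ) (hXbdd : ∀ i t ω, |X i t ω| ≤ R)
    (istar : Fin K) (n : ℕ) (hn : 1 ≤ n) (ω : Ω) :
    |rewardAvg X I n ω - empAvg X istar n ω|
      ≤ (2 * R / n) * ∑ j ∈ Finset.univ.erase istar, (playCount I j n ω : ℝ) := by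
  set T : Fin K → ℕ := fun j => playCount I j n ω with hT
  have hTle : ∀ j, T j ≤ n := fun j => playCount_le I j n ω
  have hsum : ∑ j, T j = n := sum_playCount I n ω
  set S : Fin K → ℝ := fun j => ∑ t ∈ Finset.Icc 1 (T j), X j t ω with hS
  have hreward : rewardAvg X I n ω = (∑ i, S i) / n := by
    rw [rewardAvg]
    congr 1
    exact Finset.sum_congr rfl fun i _ => mul_empAvg X i (T i) ω
  -- split S* into S istar plus a tail
  have hIcc : ∀ m : ℕ, Finset.Icc 1 m = Finset.Ioc 0 m := fun m => by
    ext t; simp [Finset.mem_Icc, Finset.mem_Ioc]; omega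
  have hsplit : ∑ t ∈ Finset.Icc 1 n, X istar t ω
      = S istar + ∑ t ∈ Finset.Ioc (T istar) n, X istar t ω := by
    simp only [hS]
    rw [hIcc, hIcc]
    exact (Finset.sum_Ioc_consecutive _ (Nat.zero_le _) (hTle istar)).symm
  have herase : ∑ i, S i = S istar + ∑ j ∈ Finset.univ.erase istar, S j :=
    (Finset.add_sum_erase _ S (Finset.mem_univ istar)).symm
  have hnum : rewardAvg X I n ω - empAvg X istar n ω
      = ((∑ j ∈ Finset.univ.erase istar, S j)
          - ∑ t ∈ Finset.Ioc (T istar) n, X istar t ω) / n := by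
    rw [hreward, empAvg, div_sub_div_same, herase, hsplit]
    ring_nf
  -- bounds
  have hSbound : ∀ j, |S j| ≤ R * T j := by
    intro j
    calc |S j| ≤ ∑ t ∈ Finset.Icc 1 (T j), |X j t ω| := Finset.abs_sum_le_sum_abs _ _
    _ ≤ ∑ t ∈ Finset.Icc 1 (T j), R := Finset.sum_le_sum fun t _ => hXbdd j t ω
    _ = R * T j := by
        have hc : (Finset.Icc 1 (T j)).card = T j := by rw [Nat.card_Icc]; omega
        rw [Finset.sum_const, hc, nsmul_eq_mul]; ring
  have htail : |∑ t ∈ Finset.Ioc (T istar) n, X istar t ω|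
      ≤ R * ((n : ℝ) - T istar) := by
    calc |∑ t ∈ Finset.Ioc (T istar) n, X istar t ω|
        ≤ ∑ t ∈ Finset.Ioc (T istar) n, |X istar t ω| := Finset.abs_sum_le_sum_abs _ _
    _ ≤ ∑ t ∈ Finset.Ioc (T istar) n, R := Finset.sum_le_sum fun t _ => hXbdd istar t ω
    _ = R * ((n : ℝ) - T istar) := by
        rw [Finset.sum_const, Nat.card_Ioc, nsmul_eq_mul, Nat.cast_sub (hTle istar)]; ring
  have hcomp : (n : ℝ) - T istar = ∑ j ∈ Finset.univ.erase istar, (T j : ℝ) := by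
    have : T istar + ∑ j ∈ Finset.univ.erase istar, T j = n := by
      rw [Finset.add_sum_erase _ T (Finset.mem_univ istar)]; exact hsum
    have := congrArg (fun m : ℕ => (m : ℝ)) this
    push_cast at this
    linarith
  have hNpos : (0 : ℝ) < n := by exact_mod_cast hn
  rw [hnum, abs_div, abs_of_pos hNpos]
  rw [div_mul_eq_mul_div, mul_comm (2 * R)]
  gcongr ?_ / _
  have h1 : |∑ j ∈ Finset.univ.erase istar, S j|
      ≤ R * ∑ j ∈ Finset.univ.erase istar, (T j : ℝ) := by
    calc |∑ j ∈ Finset.univ.erase istar, S j|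
        ≤ ∑ j ∈ Finset.univ.erase istar, |S j| := Finset.abs_sum_le_sum_abs _ _
    _ ≤ ∑ j ∈ Finset.univ.erase istar, R * (T j : ℝ) :=
        Finset.sum_le_sum fun j _ => hSbound j
    _ = R * ∑ j ∈ Finset.univ.erase istar, (T j : ℝ) := by rw [Finset.mul_sum]
  calc |∑ j ∈ Finset.univ.erase istar, S j - ∑ t ∈ Finset.Ioc (T istar) n, X istar t ω|
      ≤ |∑ j ∈ Finset.univ.erase istar, S j|
        + |∑ t ∈ Finset.Ioc (T istar) n, X istar t ω| := abs_sub _ _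
  _ ≤ (∑ j ∈ Finset.univ.erase istar, (playCount I j n ω : ℝ)) * (2 * R) := by
      rw [hcomp] at htail
      have : ∑ j ∈ Finset.univ.erase istar, (T j : ℝ)
          = ∑ j ∈ Finset.univ.erase istar, (playCount I j n ω : ℝ) := rfl
      rw [this] at h1 htail
      nlinarith [h1, htail]
end aux

lemma integrable_X' [MeasurableSpace Ω] (P : Measure Ω) [IsProbabilityMeasure P]
    (X : Fin K → ℕ → Ω → ℝ) (R : ℝ) (hXmeas : ∀ i t, Measurable (X i t))
    (hXbdd : ∀ i t ω, |X i t ω| ≤ R) (i : Fin K) (t : ℕ) :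
    Integrable (X i t) P :=
  (integrable_const R).mono' (hXmeas i t).aestronglyMeasurable
    (Filter.Eventually.of_forall fun ω => by rw [Real.norm_eq_abs]; exact hXbdd i t ω)

lemma integrable_g [MeasurableSpace Ω] (P : Measure Ω) [IsProbabilityMeasure P]
    (X : Fin K → ℕ → Ω → ℝ) (R : ℝ) (hXmeas : ∀ i t, Measurable (X i t))
    (hXbdd : ∀ i t ω, |X i t ω| ≤ R) (I : ℕ → Ω → Fin K)
    (hImeas : ∀ t, Measurable (I t)) (i : Fin K) (n : ℕ) :
    Integrable (fun ω => ∑ t ∈ Finset.Icc 1 n,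
      if t ≤ playCount I i n ω then X i t ω else 0) P := by
  apply integrable_finset_sum
  intro t _
  have hset : MeasurableSet {ω : Ω | t ≤ playCount I i n ω} :=
    (measurable_playCount I hImeas i n) measurableSet_Ici
  have heq : (fun ω => if t ≤ playCount I i n ω then X i t ω else 0)
      = Set.indicator {ω : Ω | t ≤ playCount I i n ω} (X i t) := by
    funext ω; rw [Set.indicator_apply]; rfl
  rw [heq]
  exact (integrable_X' P X R hXmeas hXbdd i t).indicator hset

lemma integrable_rewardAvg [MeasurableSpace Ω] (P : Measure Ω) [IsProbabilityMeasure P]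
    (X : Fin K → ℕ → Ω → ℝ) (R : ℝ) (hXmeas : ∀ i t, Measurable (X i t))
    (hXbdd : ∀ i t ω, |X i t ω| ≤ R) (I : ℕ → Ω → Fin K)
    (hImeas : ∀ t, Measurable (I t)) (n : ℕ) :
    Integrable (fun ω => rewardAvg X I n ω) P := by
  have heq : (fun ω => rewardAvg X I n ω)
      = fun ω => (∑ i : Fin K, ∑ t ∈ Finset.Icc 1 n,
          if t ≤ playCount I i n ω then X i t ω else 0) / n := by
    funext ω
    rw [rewardAvg]
    congr 1
    refine Finset.sum_congr rfl fun i _ => ?_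
    rw [mul_empAvg, sum_ite_eq' X i (playCount_le I i n ω)]
  rw [heq]
  exact (integrable_finset_sum _ fun i _ =>
    integrable_g P X R hXmeas hXbdd I hImeas i n).div_const n

lemma integrable_S [MeasurableSpace Ω] (P : Measure Ω) [IsProbabilityMeasure P]
    (I : ℕ → Ω → Fin K) (hImeas : ∀ t, Measurable (I t)) (istar : Fin K) (n : ℕ) :
    Integrable (fun ω => ∑ j ∈ Finset.univ.filter fun j => j ≠ istar,
      (playCount I j n ω : ℝ)) P := by
  apply integrable_finset_sum
  intro j _
  refine (integrable_const (n : ℝ)).mono'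
    (measurable_from_top.comp (measurable_playCount I hImeas j n)).aestronglyMeasurable
    (Filter.Eventually.of_forall fun ω => ?_)
  rw [Real.norm_eq_abs, abs_of_nonneg (by positivity)]
  exact_mod_cast playCount_le I j n ω

theorem ucb_aux_main
    [MeasurableSpace Ω] (P : Measure Ω) [IsProbabilityMeasure P]
    (R : ℝ)
    (X : Fin K → ℕ → Ω → ℝ)
    (hXmeas : ∀ i t, Measurable (X i t))
    (hXbdd : ∀ i t ω, |X i t ω| ≤ R)
    (istar : Fin K)
    (I : ℕ → Ω → Fin K)
    (hImeas : ∀ t, Measurable (I t))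
    (n : ℕ) (hn : 1 ≤ n) (μstar : ℝ) :
    |(∫ ω, rewardAvg X I n ω ∂P) - μstar|
      ≤ |(∫ ω, empAvg X istar n ω ∂P) - μstar|
        + (2 * R / n) *
          ∫ ω, (∑ j ∈ Finset.univ.filter fun j => j ≠ istar, (playCount I j n ω : ℝ)) ∂P := by
  have hfe : (Finset.univ.filter fun j => j ≠ istar) = Finset.univ.erase istar :=
    Finset.filter_ne' _ _
  have hf : Integrable (fun ω => rewardAvg X I n ω) P :=
    integrable_rewardAvg P X R hXmeas hXbdd I hImeas n
  have hg : Integrable (fun ω => empAvg X istar n ω) P := by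
    simp only [empAvg]
    exact (integrable_finset_sum _ fun t _ =>
      integrable_X' P X R hXmeas hXbdd istar t).div_const n
  have hS : Integrable (fun ω => ∑ j ∈ Finset.univ.filter fun j => j ≠ istar,
      (playCount I j n ω : ℝ)) P := integrable_S P I hImeas istar n
  have key : ∀ ω, |rewardAvg X I n ω - empAvg X istar n ω|
      ≤ (2 * R / n) * ∑ j ∈ Finset.univ.filter fun j => j ≠ istar,
          (playCount I j n ω : ℝ) := by
    intro ω
    rw [hfe]
    exact pointwise_bound X I R hXbdd istar n hn ω
  have step : |(∫ ω, rewardAvg X I n ω ∂P) - ∫ ω, empAvg X istar n ω ∂P|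
      ≤ (2 * R / n) *
        ∫ ω, (∑ j ∈ Finset.univ.filter fun j => j ≠ istar, (playCount I j n ω : ℝ)) ∂P := by
    rw [← integral_sub hf hg, ← integral_const_mul]
    calc |∫ ω, (rewardAvg X I n ω - empAvg X istar n ω) ∂P|
        ≤ ∫ ω, |rewardAvg X I n ω - empAvg X istar n ω| ∂P := by
          simpa [Real.norm_eq_abs] using
            norm_integral_le_integral_norm (fun ω => rewardAvg X I n ω - empAvg X istar n ω) (μ := P)
    _ ≤ ∫ ω, (2 * R / n) * ∑ j ∈ Finset.univ.filter fun j => j ≠ istar,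
          (playCount I j n ω : ℝ) ∂P :=
        integral_mono (hf.sub hg).abs (hS.const_mul _) key
  calc |(∫ ω, rewardAvg X I n ω ∂P) - μstar|
      = |((∫ ω, empAvg X istar n ω ∂P) - μstar)
          + ((∫ ω, rewardAvg X I n ω ∂P) - ∫ ω, empAvg X istar n ω ∂P)| := by ring_nf
  _ ≤ |(∫ ω, empAvg X istar n ω ∂P) - μstar|
      + |(∫ ω, rewardAvg X I n ω ∂P) - ∫ ω, empAvg X istar n ω ∂P| := abs_add_le _ _
  _ ≤ _ := by linarith [step]


/-- `|E[X̄_n] − μ*| ≤ |δ_{*,n}| + (2R/n) E[∑_{i≠i*} T_i(n)]`, where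
`δ_{*,n} = μ_{i*,n} − μ_{i*}`. -/
theorem ucb_empirical_mean_bias
    {Ω : Type*} [MeasurableSpace Ω] (P : Measure Ω) [IsProbabilityMeasure P]
    (K : ℕ) (hK : 2 ≤ K) (R : ℝ) (hR : 0 < R)
    (X : Fin K → ℕ → Ω → ℝ)
    (hXmeas : ∀ i t, Measurable (X i t))
    (hXbdd : ∀ i t ω, |X i t ω| ≤ R)
    (μ : Fin K → ℝ)
    (hconv : ∀ i, Filter.Tendsto (fun n => ∫ ω, empAvg X i n ω ∂P)
      Filter.atTop (nhds (μ i)))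
    (β ξ η α : ℝ) (hβ : 1 < β) (hξ : 0 < ξ) (hη : 1 / 2 ≤ η) (hη' : η < 1) (hα : 0 < α)
    (istar : Fin K) (hopt : ∀ j, j ≠ istar → μ j < μ istar)
    (I : ℕ → Ω → Fin K)
    (hImeas : ∀ t, Measurable (I t))
    (hPolicy : ∀ t : ℕ, 1 ≤ t → ∀ ω : Ω, ∀ j : Fin K,
      ucbIdxE X β ξ α η I j (t - 1) ω ≤ ucbIdxE X β ξ α η I (I t ω) (t - 1) ω)
    (n : ℕ) (hn : 1 ≤ n) :
    |(∫ ω, rewardAvg X I n ω ∂P) - μ istar|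
      ≤ |(∫ ω, empAvg X istar n ω ∂P) - μ istar|
        + (2 * R / n) *
          ∫ ω, (∑ j ∈ Finset.univ.filter fun j => j ≠ istar, (playCount I j n ω : ℝ)) ∂P := by
  exact ucb_aux_main P R X hXmeas hXbdd istar I hImeas n hn (μ istar)
end
end

section
/- Let i ≠ i* be a sub-optimal arm, let n ≥ 1 and let u be an integer with 1 ≤ u ≤ n, and let τ be any real number. Pointwise on the sample space: if U_{i,u,t} ≤ τ for every integer t with u ≤ t ≤ n, and U_{i*,s,u+s} > τ for every integer s with 1 ≤ s ≤ n − u, then T_i(n) ≤ u. -/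
open MeasureTheory ProbabilityTheory Finset

noncomputable section

/-!
Suppose `T_i(n) > u` and let `t + 1 ≤ n` be the time of the `(u+1)`-st play of arm `i`, so that
`T_i(t) = u`. Choosing `i` at time `t + 1` means the optimal arm's index is at most
`U_{i,u,t} ≤ τ`; in particular it is finite, so `s = T_{i*}(t) ≥ 1`. Since both arms were played
`u + s ≤ t` times in total and the bonus grows with time, `τ < U_{i*,s,u+s} ≤ U_{i*,s,t} ≤ τ`.
-/

section PlayCount

variable {Ω : Type*} {K : ℕ} (I : ℕ → Ω → Fin K) (ω : Ω)

theorem playCount_zero (j : Fin K) : playCount I j 0 ω = 0 := by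
  simp [playCount]

theorem playCount_succ (j : Fin K) (t : ℕ) :
    playCount I j (t + 1) ω = playCount I j t ω + if I (t + 1) ω = j then 1 else 0 := by
  unfold playCount
  rw [← Finset.insert_Icc_right_eq_Icc_add_one (by omega), Finset.filter_insert]
  split_ifs
  · exact Finset.card_insert_of_notMem (by simp)
  · rfl

theorem playCount_add_playCount_le {j j' : Fin K} (hjj' : j ≠ j') (t : ℕ) :
    playCount I j t ω + playCount I j' t ω ≤ t := by
  unfold playCount
  rw [← Finset.card_union_of_disjoint (Finset.disjoint_filter_filter' _ _
    (Pi.disjoint_iff.2 fun l => by simp only [Prop.disjoint_iff]; rintro ⟨rfl, h⟩; exact hjj' h))]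
  calc _ ≤ (Finset.Icc 1 t).card :=
        Finset.card_le_card (Finset.union_subset (Finset.filter_subset _ _)
          (Finset.filter_subset _ _))
    _ = t := by simp

theorem exists_play_of_lt_playCount {j : Fin K} {u n : ℕ} (h : u < playCount I j n ω) :
    ∃ t < n, I (t + 1) ω = j ∧ playCount I j t ω = u := by
  induction n with
  | zero => simp [playCount_zero] at h
  | succ n ih =>
    rw [playCount_succ] at h
    by_cases hlt : u < playCount I j n ω
    · obtain ⟨t, htn, hplay, hcount⟩ := ih hlt
      exact ⟨t, by omega, hplay, hcount⟩
    · split_ifs at h with hplay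
      · exact ⟨n, by omega, hplay, by omega⟩
      · omega

end PlayCount

theorem bonus_le_bonus {β ξ α : ℝ} (η : ℝ) (hβ : 0 ≤ β) (hαξ : 0 ≤ α / ξ) {t t' : ℕ}
    (htt' : t ≤ t') (s : ℕ) : bonus β ξ α η t s ≤ bonus β ξ α η t' s := by
  unfold bonus
  gcongr

theorem ucbIdx_le_ucbIdx {Ω : Type*} {K : ℕ} (X : Fin K → ℕ → Ω → ℝ) {β ξ α : ℝ} (η : ℝ)
    (hβ : 0 ≤ β) (hαξ : 0 ≤ α / ξ) (j : Fin K) (s : ℕ) {t t' : ℕ} (htt' : t ≤ t') (ω : Ω) :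
    ucbIdx X β ξ α η j s t ω ≤ ucbIdx X β ξ α η j s t' ω :=
  add_le_add_right (bonus_le_bonus η hβ hαξ htt' s) _

section IndexE

variable {Ω : Type*} {K : ℕ} (X : Fin K → ℕ → Ω → ℝ) (β ξ α η : ℝ) (I : ℕ → Ω → Fin K)
  (j : Fin K) (t : ℕ) (ω : Ω)

theorem ucbIdxE_of_playCount_ne_zero (h : playCount I j t ω ≠ 0) :
    ucbIdxE X β ξ α η I j t ω = ucbIdx X β ξ α η j (playCount I j t ω) t ω :=
  if_neg h

theorem ucbIdx_le_of_ucbIdxE_le_coe {r : ℝ} (h : ucbIdxE X β ξ α η I j t ω ≤ r) :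
    playCount I j t ω ≠ 0 ∧ ucbIdx X β ξ α η j (playCount I j t ω) t ω ≤ r := by
  unfold ucbIdxE at h
  split_ifs at h with h0
  · exact absurd h (by simp)
  · exact ⟨h0, EReal.coe_le_coe_iff.1 h⟩

end IndexE

theorem ucb_playCount_le_of_indices_general
    {Ω : Type*} (K : ℕ) (X : Fin K → ℕ → Ω → ℝ)
    (β ξ η α : ℝ) (hβ : 1 < β) (hξ : 0 < ξ) (hα : 0 < α)
    (istar : Fin K) (I : ℕ → Ω → Fin K)
    (hPolicy : ∀ t : ℕ, 1 ≤ t → ∀ ω : Ω, ∀ j : Fin K,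
      ucbIdxE X β ξ α η I j (t - 1) ω ≤ ucbIdxE X β ξ α η I (I t ω) (t - 1) ω)
    (i : Fin K) (hi : i ≠ istar)
    (n u : ℕ) (hu1 : 1 ≤ u) (τ : ℝ) :
    ∀ ω : Ω,
      (∀ t : ℕ, u ≤ t → t ≤ n → ucbIdx X β ξ α η i u t ω ≤ τ) →
      (∀ s : ℕ, 1 ≤ s → s ≤ n - u → ucbIdx X β ξ α η istar s (u + s) ω > τ) →
      playCount I i n ω ≤ u := by
  intro ω hidx_i hidx_star
  by_contra! hgt
  obtain ⟨t, htn, hplay, hcount⟩ := exists_play_of_lt_playCount I ω hgt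
  have hchoice := hPolicy (t + 1) (by omega) ω istar
  rw [Nat.add_sub_cancel, hplay,
    ucbIdxE_of_playCount_ne_zero X β ξ α η I i t ω (by omega), hcount] at hchoice
  obtain ⟨hs0, hstar_le⟩ := ucbIdx_le_of_ucbIdxE_le_coe X β ξ α η I istar t ω hchoice
  set s := playCount I istar t ω
  have htotal : u + s ≤ t := hcount ▸ playCount_add_playCount_le I ω hi t
  have hτ : τ < τ := calc
    τ < ucbIdx X β ξ α η istar s (u + s) ω := hidx_star s (by omega) (by omega)
    _ ≤ ucbIdx X β ξ α η istar s t ω :=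
      ucbIdx_le_ucbIdx X η (zero_lt_one.trans hβ).le (div_pos hα hξ).le istar s htotal ω
    _ ≤ ucbIdx X β ξ α η i u t ω := hstar_le
    _ ≤ τ := hidx_i t (by omega) (by omega)
  exact lt_irrefl τ hτ

/-- Pointwise: if the index of arm `i` at play count `u` never exceeds `τ` between times `u`
and `n`, while the optimal arm's index always exceeds `τ`, then `T_i(n) ≤ u`. -/
theorem ucb_playCount_le_of_indices
    {Ω : Type*} [MeasurableSpace Ω] (P : Measure Ω) [IsProbabilityMeasure P]
    (K : ℕ) (hK : 2 ≤ K) (R : ℝ) (hR : 0 < R)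
    (X : Fin K → ℕ → Ω → ℝ)
    (hXmeas : ∀ i t, Measurable (X i t))
    (hXbdd : ∀ i t ω, |X i t ω| ≤ R)
    (μ : Fin K → ℝ)
    (hconv : ∀ i, Filter.Tendsto (fun n => ∫ ω, empAvg X i n ω ∂P)
      Filter.atTop (nhds (μ i)))
    (β ξ η α : ℝ) (hβ : 1 < β) (hξ : 0 < ξ) (hη : 1 / 2 ≤ η) (hη' : η < 1) (hα : 0 < α)
    (istar : Fin K) (hopt : ∀ j, j ≠ istar → μ j < μ istar)
    (I : ℕ → Ω → Fin K)
    (hImeas : ∀ t, Measurable (I t))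
    (hPolicy : ∀ t : ℕ, 1 ≤ t → ∀ ω : Ω, ∀ j : Fin K,
      ucbIdxE X β ξ α η I j (t - 1) ω ≤ ucbIdxE X β ξ α η I (I t ω) (t - 1) ω)
    (i : Fin K) (hi : i ≠ istar)
    (n u : ℕ) (hu1 : 1 ≤ u) (hun : u ≤ n) (τ : ℝ) :
    ∀ ω : Ω,
      (∀ t : ℕ, u ≤ t → t ≤ n → ucbIdx X β ξ α η i u t ω ≤ τ) →
      (∀ s : ℕ, 1 ≤ s → s ≤ n - u → ucbIdx X β ξ α η istar s (u + s) ω > τ) →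
      playCount I i n ω ≤ u :=
  ucb_playCount_le_of_indices_general K X β ξ η α hβ hξ hα istar I hPolicy i hi n u hu1 τ
end
end
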